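/- arXiv:math/0603424 — 2 statements merged into one kernel-verified Lean document; each statement's English description precedes it below -/
import Mathlib

section
/- The function φ₈(p,q) = p·q³/(1 + p²)² + (3/2)·p·q/(1 + p²) satisfies the equation (1 + p²)φ_pp + 2pq·φ_pq + (1 + q²)φ_qq = 0 for all real p, q. -/
noncomputable def pd₁ (f : ℝ → ℝ → ℝ) : ℝ → ℝ → ℝ := fun p q => deriv (fun x => f x q) p
noncomputable def pd₂ (f : ℝ → ℝ → ℝ) : ℝ → ℝ → ℝ := fun p q => deriv (fun y => f p y) q

/-! All partial derivatives of `φ₈` up to order two are rational in `p` with powers of `1 + p²` as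
denominators and polynomial in `q`; computing them explicitly, the equation becomes a polynomial
identity after clearing denominators. -/

lemma pd₁_eq_of_hasDerivAt {f g : ℝ → ℝ → ℝ}
    (h : ∀ p q, HasDerivAt (fun x => f x q) (g p q) p) : pd₁ f = g :=
  funext₂ fun p q => (h p q).deriv

lemma pd₂_eq_of_hasDerivAt {f g : ℝ → ℝ → ℝ}
    (h : ∀ p q, HasDerivAt (fun y => f p y) (g p q) q) : pd₂ f = g :=
  funext₂ fun p q => (h p q).deriv

lemma HasDerivAt.div_one_add_sq_pow {g : ℝ → ℝ} {g' x : ℝ} (hg : HasDerivAt g g' x) (n : ℕ) :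
    HasDerivAt (fun x => g x / (1 + x ^ 2) ^ n)
      ((g' * (1 + x ^ 2) - 2 * n * x * g x) / (1 + x ^ 2) ^ (n + 1)) x := by
  have hpos : (0 : ℝ) < 1 + x ^ 2 := by positivity
  have hden : HasDerivAt (fun x => 1 + x ^ 2) (2 * x) x := by
    simpa using (hasDerivAt_pow 2 x).const_add 1
  refine (hg.div (hden.pow n) (pow_pos hpos n).ne').congr_deriv ?_
  simp only [Pi.pow_apply]
  rcases n with _ | n
  · field_simp
    ring
  · field_simp
    push_cast
    ring

noncomputable def phi₈ (p q : ℝ) : ℝ :=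
  p * q ^ 3 / (1 + p ^ 2) ^ 2 + (3 / 2) * (p * q) / (1 + p ^ 2)

lemma pd₁_phi₈ : pd₁ phi₈ = fun p q =>
    q ^ 3 * (1 - 3 * p ^ 2) / (1 + p ^ 2) ^ 3 + (3 / 2) * q * (1 - p ^ 2) / (1 + p ^ 2) ^ 2 := by
  refine pd₁_eq_of_hasDerivAt fun p q => ?_
  have h := (((hasDerivAt_id' p).mul_const (q ^ 3)).div_one_add_sq_pow 2).add
    ((((hasDerivAt_id' p).mul_const q).const_mul (3 / 2)).div_one_add_sq_pow 1)
  refine (h.congr_of_eventuallyEq (.of_forall fun x => by simp [phi₈])).congr_deriv ?_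
  field_simp
  ring

lemma pd₂_phi₈ : pd₂ phi₈ = fun p q =>
    3 * p * q ^ 2 / (1 + p ^ 2) ^ 2 + (3 / 2) * p / (1 + p ^ 2) := by
  refine pd₂_eq_of_hasDerivAt fun p q => ?_
  refine ((((hasDerivAt_pow 3 q).const_mul p).div_const _).add
    ((((hasDerivAt_id' q).const_mul p).const_mul (3 / 2)).div_const _)).congr_deriv ?_
  ring

lemma pd₁_pd₁_phi₈ : pd₁ (pd₁ phi₈) = fun p q =>
    -12 * p * q ^ 3 * (1 - p ^ 2) / (1 + p ^ 2) ^ 4 - 3 * p * q * (3 - p ^ 2) / (1 + p ^ 2) ^ 3 := by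
  rw [pd₁_phi₈]
  refine pd₁_eq_of_hasDerivAt fun p q => ?_
  have h := (((((hasDerivAt_pow 2 p).const_mul 3).const_sub 1).const_mul (q ^ 3)).div_one_add_sq_pow 3).add
    ((((hasDerivAt_pow 2 p).const_sub 1).const_mul ((3 / 2) * q)).div_one_add_sq_pow 2)
  refine h.congr_deriv ?_
  field_simp
  ring

lemma pd₁_pd₂_phi₈ : pd₁ (pd₂ phi₈) = fun p q =>
    3 * q ^ 2 * (1 - 3 * p ^ 2) / (1 + p ^ 2) ^ 3 + (3 / 2) * (1 - p ^ 2) / (1 + p ^ 2) ^ 2 := by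
  rw [pd₂_phi₈]
  refine pd₁_eq_of_hasDerivAt fun p q => ?_
  have h := (((hasDerivAt_id' p).const_mul 3).mul_const (q ^ 2)).div_one_add_sq_pow 2
    |>.add (((hasDerivAt_id' p).const_mul (3 / 2)).div_one_add_sq_pow 1)
  refine (h.congr_of_eventuallyEq (.of_forall fun x => by simp)).congr_deriv ?_
  field_simp
  ring

lemma pd₂_pd₂_phi₈ : pd₂ (pd₂ phi₈) = fun p q => 6 * p * q / (1 + p ^ 2) ^ 2 := by
  rw [pd₂_phi₈]
  refine pd₂_eq_of_hasDerivAt fun p q => ?_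
  refine ((((hasDerivAt_pow 2 q).const_mul (3 * p)).div_const _).add_const _).congr_deriv ?_
  ring

theorem phi_solves_legendre_eq :
    ∀ p q : ℝ,
      (1 + p ^ 2) * pd₁ (pd₁ (fun a b => a * b ^ 3 / (1 + a ^ 2) ^ 2 + (3 / 2) * (a * b) / (1 + a ^ 2))) p q
        + 2 * p * q * pd₁ (pd₂ (fun a b => a * b ^ 3 / (1 + a ^ 2) ^ 2 + (3 / 2) * (a * b) / (1 + a ^ 2))) p q
        + (1 + q ^ 2) * pd₂ (pd₂ (fun a b => a * b ^ 3 / (1 + a ^ 2) ^ 2 + (3 / 2) * (a * b) / (1 + a ^ 2))) p q = 0 := by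
  intro p q
  change (1 + p ^ 2) * pd₁ (pd₁ phi₈) p q + 2 * p * q * pd₁ (pd₂ phi₈) p q
    + (1 + q ^ 2) * pd₂ (pd₂ phi₈) p q = 0
  rw [pd₁_pd₁_phi₈, pd₁_pd₂_phi₈, pd₂_pd₂_phi₈]
  field_simp
  ring
end

section
/- If φ(p,q) is a sufficiently smooth solution of (1 + p²)φ_pp + 2pq·φ_pq + (1 + q²)φ_qq = 0 on ℝ², then ψ(p,q) = −q·φ + (1 + q²)·φ_q + pq·φ_p is also a solution of the same equation. -/
open Function

section

variable {f : ℝ → ℝ → ℝ} {p q : ℝ}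

theorem pd₁_eq_fderiv (hf : DifferentiableAt ℝ (uncurry f) (p, q)) :
    pd₁ f p q = fderiv ℝ (uncurry f) (p, q) (1, 0) := by
  have h : HasDerivAt (fun x : ℝ => (x, q)) (1, 0) p :=
    (hasDerivAt_id p).prodMk (hasDerivAt_const p q)
  exact (hf.hasFDerivAt.comp_hasDerivAt p h).deriv

theorem pd₂_eq_fderiv (hf : DifferentiableAt ℝ (uncurry f) (p, q)) :
    pd₂ f p q = fderiv ℝ (uncurry f) (p, q) (0, 1) := by
  have h : HasDerivAt (fun y : ℝ => (p, y)) (0, 1) q :=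
    (hasDerivAt_const q p).prodMk (hasDerivAt_id q)
  exact (hf.hasFDerivAt.comp_hasDerivAt q h).deriv

theorem hasDerivAt_pd₁ (hf : DifferentiableAt ℝ (uncurry f) (p, q)) :
    HasDerivAt (fun x => f x q) (pd₁ f p q) p := by
  rw [pd₁_eq_fderiv hf]
  exact hf.hasFDerivAt.comp_hasDerivAt p ((hasDerivAt_id p).prodMk (hasDerivAt_const p q))

theorem hasDerivAt_pd₂ (hf : DifferentiableAt ℝ (uncurry f) (p, q)) :
    HasDerivAt (fun y => f p y) (pd₂ f p q) q := by
  rw [pd₂_eq_fderiv hf]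
  exact hf.hasFDerivAt.comp_hasDerivAt q ((hasDerivAt_const q p).prodMk (hasDerivAt_id q))

theorem ContDiff.hasDerivAt_pd₁ (hf : ContDiff ℝ 1 (uncurry f)) (p q : ℝ) :
    HasDerivAt (fun x => f x q) (pd₁ f p q) p :=
  _root_.hasDerivAt_pd₁ (hf.differentiable one_ne_zero _)

theorem ContDiff.hasDerivAt_pd₂ (hf : ContDiff ℝ 1 (uncurry f)) (p q : ℝ) :
    HasDerivAt (fun y => f p y) (pd₂ f p q) q :=
  _root_.hasDerivAt_pd₂ (hf.differentiable one_ne_zero _)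

theorem uncurry_pd₁ (hf : Differentiable ℝ (uncurry f)) :
    uncurry (pd₁ f) = fun z => fderiv ℝ (uncurry f) z (1, 0) :=
  funext fun _ => pd₁_eq_fderiv (hf _)

theorem uncurry_pd₂ (hf : Differentiable ℝ (uncurry f)) :
    uncurry (pd₂ f) = fun z => fderiv ℝ (uncurry f) z (0, 1) :=
  funext fun _ => pd₂_eq_fderiv (hf _)

theorem ContDiff.uncurry_pd₁ {m n : WithTop ℕ∞} (hf : ContDiff ℝ n (uncurry f))
    (hmn : m + 1 ≤ n) :
    ContDiff ℝ m (uncurry (pd₁ f)) := by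
  rw [_root_.uncurry_pd₁ (hf.differentiable (one_pos.trans_le (le_add_self.trans hmn)).ne')]
  exact (hf.fderiv_right hmn).clm_apply contDiff_const

theorem ContDiff.uncurry_pd₂ {m n : WithTop ℕ∞} (hf : ContDiff ℝ n (uncurry f))
    (hmn : m + 1 ≤ n) :
    ContDiff ℝ m (uncurry (pd₂ f)) := by
  rw [_root_.uncurry_pd₂ (hf.differentiable (one_pos.trans_le (le_add_self.trans hmn)).ne')]
  exact (hf.fderiv_right hmn).clm_apply contDiff_const

theorem pd₁_pd₂_comm (hf : ContDiff ℝ 2 (uncurry f)) : pd₁ (pd₂ f) = pd₂ (pd₁ f) := by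
  funext p q
  have hd : Differentiable ℝ (fderiv ℝ (uncurry f)) :=
    (hf.fderiv_right (m := 1) (by norm_num)).differentiable one_ne_zero
  have hf' := hf.differentiable two_ne_zero
  rw [pd₁_eq_fderiv ((hf.uncurry_pd₂ (m := 1) (by norm_num)).differentiable one_ne_zero _),
    pd₂_eq_fderiv ((hf.uncurry_pd₁ (m := 1) (by norm_num)).differentiable one_ne_zero _),
    uncurry_pd₁ hf', uncurry_pd₂ hf', fderiv_clm_apply (hd _) (differentiableAt_const _),
    fderiv_clm_apply (hd _) (differentiableAt_const _)]
  simpa using (hf.contDiffAt.isSymmSndFDerivAt (by simp)) (1, 0) (0, 1)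

/-- The minimal surface operator in Legendre-transformed coordinates `(p, q) = ∇u`. -/
noncomputable def minimalSurfaceOperator (f : ℝ → ℝ → ℝ) : ℝ → ℝ → ℝ := fun p q =>
  (1 + p ^ 2) * pd₁ (pd₁ f) p q + 2 * p * q * pd₁ (pd₂ f) p q
    + (1 + q ^ 2) * pd₂ (pd₂ f) p q

noncomputable def rotationRecursion (f : ℝ → ℝ → ℝ) : ℝ → ℝ → ℝ := fun p q =>
  -q * f p q + (1 + q ^ 2) * pd₂ f p q + p * q * pd₁ f p q

theorem pd₁_rotationRecursion (hf : ContDiff ℝ 2 (uncurry f)) :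
    pd₁ (rotationRecursion f) = fun p q =>
      (1 + q ^ 2) * pd₁ (pd₂ f) p q + p * q * pd₁ (pd₁ f) p q := by
  funext p q
  have h₁ : ContDiff ℝ 1 (uncurry (pd₁ f)) := hf.uncurry_pd₁ (by norm_num)
  have h₂ : ContDiff ℝ 1 (uncurry (pd₂ f)) := hf.uncurry_pd₂ (by norm_num)
  have H := ((((hf.of_le (by norm_num)).hasDerivAt_pd₁ p q).const_mul (-q)).add
      ((h₂.hasDerivAt_pd₁ p q).const_mul (1 + q ^ 2))).add
      (((hasDerivAt_id' p).mul_const q).mul (h₁.hasDerivAt_pd₁ p q))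
  exact H.deriv.trans (by ring)

theorem pd₂_rotationRecursion (hf : ContDiff ℝ 2 (uncurry f)) :
    pd₂ (rotationRecursion f) = fun p q => -f p q + q * pd₂ f p q
      + (1 + q ^ 2) * pd₂ (pd₂ f) p q + p * pd₁ f p q + p * q * pd₁ (pd₂ f) p q := by
  funext p q
  have h₁ : ContDiff ℝ 1 (uncurry (pd₁ f)) := hf.uncurry_pd₁ (by norm_num)
  have h₂ : ContDiff ℝ 1 (uncurry (pd₂ f)) := hf.uncurry_pd₂ (by norm_num)
  have H := (((hasDerivAt_neg q).mul ((hf.of_le (by norm_num)).hasDerivAt_pd₂ p q)).add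
      (((hasDerivAt_pow 2 q).const_add 1).mul (h₂.hasDerivAt_pd₂ p q))).add
      (((hasDerivAt_id' q).const_mul p).mul (h₁.hasDerivAt_pd₂ p q))
  rw [pd₁_pd₂_comm hf]
  exact H.deriv.trans (by ring)

theorem pd₁_pd₁_rotationRecursion (hf : ContDiff ℝ 3 (uncurry f)) :
    pd₁ (pd₁ (rotationRecursion f)) p q = (1 + q ^ 2) * pd₁ (pd₁ (pd₂ f)) p q
      + q * pd₁ (pd₁ f) p q + p * q * pd₁ (pd₁ (pd₁ f)) p q := by
  have h₁ : ContDiff ℝ 2 (uncurry (pd₁ f)) := hf.uncurry_pd₁ (by norm_num)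
  have h₂ : ContDiff ℝ 2 (uncurry (pd₂ f)) := hf.uncurry_pd₂ (by norm_num)
  have h₁₁ : ContDiff ℝ 1 (uncurry (pd₁ (pd₁ f))) := h₁.uncurry_pd₁ (by norm_num)
  have h₁₂ : ContDiff ℝ 1 (uncurry (pd₁ (pd₂ f))) := h₂.uncurry_pd₁ (by norm_num)
  have H := ((h₁₂.hasDerivAt_pd₁ p q).const_mul (1 + q ^ 2)).add
      (((hasDerivAt_id' p).mul_const q).mul (h₁₁.hasDerivAt_pd₁ p q))
  rw [pd₁_rotationRecursion (hf.of_le (by norm_num))]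
  exact H.deriv.trans (by ring)

theorem pd₁_pd₂_rotationRecursion (hf : ContDiff ℝ 3 (uncurry f)) :
    pd₁ (pd₂ (rotationRecursion f)) p q = 2 * q * pd₁ (pd₂ f) p q
      + (1 + q ^ 2) * pd₁ (pd₂ (pd₂ f)) p q + p * pd₁ (pd₁ f) p q
      + p * q * pd₁ (pd₁ (pd₂ f)) p q := by
  have h₁ : ContDiff ℝ 2 (uncurry (pd₁ f)) := hf.uncurry_pd₁ (by norm_num)
  have h₂ : ContDiff ℝ 2 (uncurry (pd₂ f)) := hf.uncurry_pd₂ (by norm_num)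
  have h₁₂ : ContDiff ℝ 1 (uncurry (pd₁ (pd₂ f))) := h₂.uncurry_pd₁ (by norm_num)
  have h₂₂ : ContDiff ℝ 1 (uncurry (pd₂ (pd₂ f))) := h₂.uncurry_pd₂ (by norm_num)
  have H := (((((hf.of_le (by norm_num)).hasDerivAt_pd₁ p q).neg.add
      (((h₂.of_le (by norm_num)).hasDerivAt_pd₁ p q).const_mul q)).add
      ((h₂₂.hasDerivAt_pd₁ p q).const_mul (1 + q ^ 2))).add
      ((hasDerivAt_id' p).mul ((h₁.of_le (by norm_num)).hasDerivAt_pd₁ p q))).add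
      (((hasDerivAt_id' p).mul_const q).mul (h₁₂.hasDerivAt_pd₁ p q))
  rw [pd₂_rotationRecursion (hf.of_le (by norm_num))]
  exact H.deriv.trans (by ring)

theorem pd₂_pd₂_rotationRecursion (hf : ContDiff ℝ 3 (uncurry f)) :
    pd₂ (pd₂ (rotationRecursion f)) p q = 3 * q * pd₂ (pd₂ f) p q
      + (1 + q ^ 2) * pd₂ (pd₂ (pd₂ f)) p q + 2 * p * pd₁ (pd₂ f) p q
      + p * q * pd₁ (pd₂ (pd₂ f)) p q := by
  have h₁ : ContDiff ℝ 1 (uncurry (pd₁ f)) := hf.uncurry_pd₁ (by norm_num)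
  have h₂ : ContDiff ℝ 2 (uncurry (pd₂ f)) := hf.uncurry_pd₂ (by norm_num)
  have h₁₂ : ContDiff ℝ 1 (uncurry (pd₁ (pd₂ f))) := h₂.uncurry_pd₁ (by norm_num)
  have h₂₂ : ContDiff ℝ 1 (uncurry (pd₂ (pd₂ f))) := h₂.uncurry_pd₂ (by norm_num)
  have H := (((((hf.of_le (by norm_num)).hasDerivAt_pd₂ p q).neg.add
      ((hasDerivAt_id' q).mul ((h₂.of_le (by norm_num)).hasDerivAt_pd₂ p q))).add
      (((hasDerivAt_pow 2 q).const_add 1).mul (h₂₂.hasDerivAt_pd₂ p q))).add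
      ((h₁.hasDerivAt_pd₂ p q).const_mul p)).add
      (((hasDerivAt_id' q).const_mul p).mul (h₁₂.hasDerivAt_pd₂ p q))
  rw [pd₂_rotationRecursion (hf.of_le (by norm_num)), pd₁_pd₂_comm h₂]
  rw [← pd₁_pd₂_comm (hf.of_le (by norm_num))] at H
  exact H.deriv.trans (by ring)

theorem pd₁_minimalSurfaceOperator (hf : ContDiff ℝ 3 (uncurry f)) :
    pd₁ (minimalSurfaceOperator f) p q = 2 * p * pd₁ (pd₁ f) p q
      + (1 + p ^ 2) * pd₁ (pd₁ (pd₁ f)) p q + 2 * q * pd₁ (pd₂ f) p q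
      + 2 * p * q * pd₁ (pd₁ (pd₂ f)) p q + (1 + q ^ 2) * pd₁ (pd₂ (pd₂ f)) p q := by
  have h₁ : ContDiff ℝ 2 (uncurry (pd₁ f)) := hf.uncurry_pd₁ (by norm_num)
  have h₂ : ContDiff ℝ 2 (uncurry (pd₂ f)) := hf.uncurry_pd₂ (by norm_num)
  have h₁₁ : ContDiff ℝ 1 (uncurry (pd₁ (pd₁ f))) := h₁.uncurry_pd₁ (by norm_num)
  have h₁₂ : ContDiff ℝ 1 (uncurry (pd₁ (pd₂ f))) := h₂.uncurry_pd₁ (by norm_num)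
  have h₂₂ : ContDiff ℝ 1 (uncurry (pd₂ (pd₂ f))) := h₂.uncurry_pd₂ (by norm_num)
  have H := ((((hasDerivAt_pow 2 p).const_add 1).mul (h₁₁.hasDerivAt_pd₁ p q)).add
      ((((hasDerivAt_id' p).const_mul 2).mul_const q).mul (h₁₂.hasDerivAt_pd₁ p q))).add
      ((h₂₂.hasDerivAt_pd₁ p q).const_mul (1 + q ^ 2))
  exact H.deriv.trans (by ring)

theorem pd₂_minimalSurfaceOperator (hf : ContDiff ℝ 3 (uncurry f)) :
    pd₂ (minimalSurfaceOperator f) p q = (1 + p ^ 2) * pd₁ (pd₁ (pd₂ f)) p q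
      + 2 * p * pd₁ (pd₂ f) p q + 2 * p * q * pd₁ (pd₂ (pd₂ f)) p q
      + 2 * q * pd₂ (pd₂ f) p q + (1 + q ^ 2) * pd₂ (pd₂ (pd₂ f)) p q := by
  have h₁ : ContDiff ℝ 2 (uncurry (pd₁ f)) := hf.uncurry_pd₁ (by norm_num)
  have h₂ : ContDiff ℝ 2 (uncurry (pd₂ f)) := hf.uncurry_pd₂ (by norm_num)
  have h₁₁ : ContDiff ℝ 1 (uncurry (pd₁ (pd₁ f))) := h₁.uncurry_pd₁ (by norm_num)
  have h₁₂ : ContDiff ℝ 1 (uncurry (pd₁ (pd₂ f))) := h₂.uncurry_pd₁ (by norm_num)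
  have h₂₂ : ContDiff ℝ 1 (uncurry (pd₂ (pd₂ f))) := h₂.uncurry_pd₂ (by norm_num)
  have H := (((h₁₁.hasDerivAt_pd₂ p q).const_mul (1 + p ^ 2)).add
      (((hasDerivAt_id' q).const_mul (2 * p)).mul (h₁₂.hasDerivAt_pd₂ p q))).add
      (((hasDerivAt_pow 2 q).const_add 1).mul (h₂₂.hasDerivAt_pd₂ p q))
  rw [← pd₁_pd₂_comm h₁, ← pd₁_pd₂_comm h₂, ← pd₁_pd₂_comm (hf.of_le (by norm_num))]
    at H
  exact H.deriv.trans (by ring)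

theorem minimalSurfaceOperator_rotationRecursion (hf : ContDiff ℝ 3 (uncurry f)) :
    minimalSurfaceOperator (rotationRecursion f) p q = q * minimalSurfaceOperator f p q
      + p * q * pd₁ (minimalSurfaceOperator f) p q
      + (1 + q ^ 2) * pd₂ (minimalSurfaceOperator f) p q := by
  rw [pd₁_minimalSurfaceOperator hf, pd₂_minimalSurfaceOperator hf]
  simp only [minimalSurfaceOperator, pd₁_pd₁_rotationRecursion hf,
    pd₁_pd₂_rotationRecursion hf, pd₂_pd₂_rotationRecursion hf]
  ring

end

theorem recursion_preserves_solutions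
    (φ : ℝ → ℝ → ℝ) (hφ : ContDiff ℝ 3 (fun z : ℝ × ℝ => φ z.1 z.2))
    (hsol : ∀ p q : ℝ,
      (1 + p ^ 2) * pd₁ (pd₁ φ) p q + 2 * p * q * pd₁ (pd₂ φ) p q
        + (1 + q ^ 2) * pd₂ (pd₂ φ) p q = 0) :
    ∀ p q : ℝ,
      (1 + p ^ 2) * pd₁ (pd₁ (fun p q => -q * φ p q + (1 + q ^ 2) * pd₂ φ p q + p * q * pd₁ φ p q)) p q
        + 2 * p * q * pd₁ (pd₂ (fun p q => -q * φ p q + (1 + q ^ 2) * pd₂ φ p q + p * q * pd₁ φ p q)) p q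
        + (1 + q ^ 2) * pd₂ (pd₂ (fun p q => -q * φ p q + (1 + q ^ 2) * pd₂ φ p q + p * q * pd₁ φ p q)) p q = 0 := by
  intro p q
  change minimalSurfaceOperator (rotationRecursion φ) p q = 0
  have hM : minimalSurfaceOperator φ = 0 := funext₂ hsol
  rw [minimalSurfaceOperator_rotationRecursion hφ, hM]
  simp [pd₁, pd₂]
end
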